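/- arXiv:1701.05919 — 4 statements merged into one kernel-verified Lean document; each statement's English description precedes it below -/
import Mathlib

section
/- For all natural numbers m', n, m and every real γ with 0 < γ < 1 and γ ≠ 1/2, one has (m' + 2γ)(m' + n) - (m - n + 1)(m + 1 - 2γ) ≠ 0. -/
/-- Non-resonance condition for homogeneous solvability of the degenerate
Dirichlet problem for `D = -div(y^{1-2γ}∇·)` on the upper half space. -/
theorem dirichlet_nonresonance (m' n m : ℕ) (γ : ℝ) (h0 : 0 < γ) (h1 : γ < 1)
    (h2 : γ ≠ 1 / 2) :
    ((m' : ℝ) + 2 * γ) * ((m' : ℝ) + (n : ℝ)) -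
      ((m : ℝ) - (n : ℝ) + 1) * ((m : ℝ) + 1 - 2 * γ) ≠ 0 := by
  intro heq
  have hk : (0:ℝ) < (m':ℝ) + m + 1 := by positivity
  have key : ((m:ℝ) - n + 1 - m') * ((m':ℝ) + m + 1)
      = (2*γ) * ((m':ℝ) + m + 1) := by linear_combination -heq
  have h2γ : (m:ℝ) - n + 1 - m' = 2*γ := mul_right_cancel₀ (ne_of_gt hk) key
  set t : ℤ := (m:ℤ) - n + 1 - m' with ht
  have htr : (t:ℝ) = 2*γ := by push_cast [ht]; linarith
  have htl : (0:ℤ) < t := by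
    have : (0:ℝ) < (t:ℝ) := by rw [htr]; linarith
    exact_mod_cast this
  have htu : t < 2 := by
    have : (t:ℝ) < 2 := by rw [htr]; linarith
    exact_mod_cast this
  have : t = 1 := by omega
  apply h2
  have : (t:ℝ) = 1 := by exact_mod_cast this
  rw [this] at htr
  linarith
end

section
/- For all natural numbers m', n, m and every real γ with 0 < γ < 1 and γ ≠ 1/2, one has m'(m' + n - 2γ) - (m - n + 1 + 2γ)(m + 1) ≠ 0. -/
/-- Non-resonance condition for homogeneous solvability of the degenerate
Neumann problem for `D = -div(y^{1-2γ}∇·)` on the upper half space. -/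
theorem neumann_nonresonance (m' n m : ℕ) (γ : ℝ) (h0 : 0 < γ) (h1 : γ < 1)
    (h2 : γ ≠ 1 / 2) :
    (m' : ℝ) * ((m' : ℝ) + (n : ℝ) - 2 * γ) -
      ((m : ℝ) - (n : ℝ) + 1 + 2 * γ) * ((m : ℝ) + 1) ≠ 0 := by
  intro h
  have hfac : ((m' : ℝ) + (m : ℝ) + 1) * ((m' : ℝ) - (m : ℝ) - 1 + (n : ℝ) - 2 * γ) = 0 := by
    linear_combination h
  have hpos : ((m' : ℝ) + (m : ℝ) + 1) ≠ 0 := by positivity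
  have h2γ : 2 * γ = (m' : ℝ) - (m : ℝ) - 1 + (n : ℝ) := by
    rcases mul_eq_zero.mp hfac with h' | h'
    · exact absurd h' hpos
    · linarith
  set k : ℤ := (m' : ℤ) - (m : ℤ) - 1 + (n : ℤ) with hk
  have hcast : (k : ℝ) = 2 * γ := by
    push_cast [hk]
    linarith
  have hk0 : (0 : ℝ) < (k : ℝ) := by rw [hcast]; linarith
  have hk2 : (k : ℝ) < 2 := by rw [hcast]; linarith
  have h0' : (0 : ℤ) < k := by exact_mod_cast hk0
  have h2' : k < 2 := by exact_mod_cast hk2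
  have : k = 1 := by omega
  apply h2
  have : (k : ℝ) = 1 := by exact_mod_cast this
  rw [this] at hcast
  linarith
end

section
/- Let n ≥ 1 be an integer and γ ∈ (0,1). The function K(y,x) = y^{2γ} / (y² + |x|²)^{(n+2γ)/2}, defined for y > 0 and x ∈ ℝⁿ, satisfies div(y^{1-2γ} ∇K) = 0 on the open upper half space ℝ^{n+1}_+ = {(y,x) : y > 0}. -/
open Real

/-- Weighted divergence `div(y^{1-2γ} ∇u)` on `ℝ^{n+1} = ℝ × ℝⁿ`,
with first coordinate `y` and Euclidean gradient/divergence. -/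
noncomputable def divW {n : ℕ} (γ : ℝ) (u : ℝ × EuclideanSpace ℝ (Fin n) → ℝ)
    (z : ℝ × EuclideanSpace ℝ (Fin n)) : ℝ :=
  fderiv ℝ (fun p : ℝ × EuclideanSpace ℝ (Fin n) =>
      p.1 ^ (1 - 2 * γ) * fderiv ℝ u p (1, 0)) z (1, 0)
    + ∑ i : Fin n,
      fderiv ℝ (fun p : ℝ × EuclideanSpace ℝ (Fin n) =>
          p.1 ^ (1 - 2 * γ) * fderiv ℝ u p (0, EuclideanSpace.single i 1)) z
        (0, EuclideanSpace.single i 1)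

/-! With `ρ = y² + |x|²`, the weighted gradient `y^{1-a} ∇(y^a ρ^{-b})` is
`(a ρ^{-b} - 2b y² ρ^{-b-1}, -2b y x ρ^{-b-1})`, and its divergence is
`2b (2b - n - a) y ρ^{-b-1}`, which vanishes for the Poisson exponent `b = (n + a)/2`. -/

open ContinuousLinearMap Topology

section

variable {n : ℕ}

local notation "E" => EuclideanSpace ℝ (Fin n)

/-- The product norm on `ℝ × E` is the sup norm, so the Euclidean `|p|²` is spelled out. -/
noncomputable def eucNormSq (p : ℝ × E) : ℝ := p.1 ^ 2 + ‖p.2‖ ^ 2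

lemma eucNormSq_pos {p : ℝ × E} (hp : 0 < p.1) : 0 < eucNormSq p := by
  unfold eucNormSq; positivity

lemma hasFDerivAt_eucNormSq (p : ℝ × E) :
    HasFDerivAt eucNormSq
      ((2 * p.1) • fst ℝ ℝ E + 2 • (innerSL ℝ p.2).comp (snd ℝ ℝ E)) p :=
  ((hasFDerivAt_fst.pow 2).add hasFDerivAt_snd.norm_sq).congr_fderiv (by ext <;> simp)

lemma hasFDerivAt_eucNormSq_rpow (s : ℝ) {p : ℝ × E} (hp : 0 < p.1) :
    HasFDerivAt (fun q => eucNormSq q ^ s) ((s * eucNormSq p ^ (s - 1)) •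
      ((2 * p.1) • fst ℝ ℝ E + 2 • (innerSL ℝ p.2).comp (snd ℝ ℝ E))) p :=
  (hasFDerivAt_eucNormSq p).rpow_const (Or.inl (eucNormSq_pos hp).ne')

noncomputable def powKernel (a b : ℝ) (p : ℝ × E) : ℝ := p.1 ^ a * eucNormSq p ^ (-b)

lemma fderiv_powKernel_apply (a b : ℝ) {q : ℝ × E} (hq : 0 < q.1) (v : ℝ × E) :
    fderiv ℝ (powKernel a b) q v = q.1 ^ (a - 1) *
      (a * eucNormSq q ^ (-b) * v.1
        - 2 * b * q.1 * eucNormSq q ^ (-b - 1) * (q.1 * v.1 + inner ℝ q.2 v.2)) := by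
  have hq' : q.1 ^ a = q.1 ^ (a - 1) * q.1 := by rw [← rpow_add_one hq.ne']; ring_nf
  have h : HasFDerivAt (powKernel a b) _ q :=
    (hasFDerivAt_fst.rpow_const (Or.inl hq.ne')).mul (hasFDerivAt_eucNormSq_rpow (-b) hq)
  rw [h.fderiv]
  simp [hq']
  ring

noncomputable def vertFlux (a b : ℝ) (p : ℝ × E) : ℝ :=
  a * eucNormSq p ^ (-b) - 2 * b * p.1 ^ 2 * eucNormSq p ^ (-b - 1)

noncomputable def horizFlux (b : ℝ) (i : Fin n) (p : ℝ × E) : ℝ :=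
  -2 * b * p.1 * eucNormSq p ^ (-b - 1) * p.2 i

lemma rpow_one_sub_mul_rpow_sub_one {y : ℝ} (hy : 0 < y) (a : ℝ) :
    y ^ (1 - a) * y ^ (a - 1) = 1 := by
  rw [← rpow_add hy]; simp

lemma weighted_fderiv_powKernel_fst_eventuallyEq (a b : ℝ) {z : ℝ × E} (hz : 0 < z.1) :
    (fun p : ℝ × E => p.1 ^ (1 - a) * fderiv ℝ (powKernel a b) p (1, 0)) =ᶠ[𝓝 z]
      vertFlux a b := by
  filter_upwards [(isOpen_lt continuous_const continuous_fst).mem_nhds hz] with q (hq : 0 < q.1)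
  rw [fderiv_powKernel_apply a b hq, ← mul_assoc, rpow_one_sub_mul_rpow_sub_one hq, vertFlux]
  simp
  ring

lemma weighted_fderiv_powKernel_single_eventuallyEq (a b : ℝ) (i : Fin n) {z : ℝ × E}
    (hz : 0 < z.1) :
    (fun p : ℝ × E =>
        p.1 ^ (1 - a) * fderiv ℝ (powKernel a b) p (0, EuclideanSpace.single i 1))
      =ᶠ[𝓝 z] horizFlux b i := by
  filter_upwards [(isOpen_lt continuous_const continuous_fst).mem_nhds hz] with q (hq : 0 < q.1)
  rw [fderiv_powKernel_apply a b hq, ← mul_assoc, rpow_one_sub_mul_rpow_sub_one hq, horizFlux]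
  simp [EuclideanSpace.inner_single_right]

lemma fderiv_vertFlux_fst (a b : ℝ) {z : ℝ × E} (hz : 0 < z.1) :
    fderiv ℝ (vertFlux a b) z (1, 0) = 2 * b * z.1 *
      (2 * (b + 1) * z.1 ^ 2 * eucNormSq z ^ (-b - 2) - (a + 2) * eucNormSq z ^ (-b - 1)) := by
  have h : HasFDerivAt (vertFlux a b) _ z :=
    ((hasFDerivAt_eucNormSq_rpow (-b) hz).const_mul a).sub
      (((hasFDerivAt_fst.pow 2).const_mul (2 * b)).mul (hasFDerivAt_eucNormSq_rpow (-b - 1) hz))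
  rw [h.fderiv]
  simp [show -b - 1 - 1 = -b - 2 by ring]
  ring

lemma fderiv_horizFlux_single (b : ℝ) (i : Fin n) {z : ℝ × E} (hz : 0 < z.1) :
    fderiv ℝ (horizFlux b i) z (0, EuclideanSpace.single i 1) = 2 * b * z.1 *
      (2 * (b + 1) * z.2 i ^ 2 * eucNormSq z ^ (-b - 2) - eucNormSq z ^ (-b - 1)) := by
  have h : HasFDerivAt (horizFlux b i) _ z :=
    ((hasFDerivAt_fst.const_mul (-2 * b)).mul (hasFDerivAt_eucNormSq_rpow (-b - 1) hz)).mul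
      ((EuclideanSpace.proj i).comp (snd ℝ ℝ E)).hasFDerivAt
  rw [h.fderiv]
  simp [show -b - 1 - 1 = -b - 2 by ring, EuclideanSpace.inner_single_right]
  ring

lemma divW_powKernel (γ b : ℝ) {z : ℝ × E} (hz : 0 < z.1) :
    divW γ (powKernel (2 * γ) b) z =
      2 * b * (2 * b - n - 2 * γ) * z.1 * eucNormSq z ^ (-b - 1) := by
  have hρ : eucNormSq z ^ (-b - 2) * eucNormSq z = eucNormSq z ^ (-b - 1) := by
    rw [← rpow_add_one (eucNormSq_pos hz).ne']; ring_nf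
  have hx : ∑ i, z.2 i ^ 2 = eucNormSq z - z.1 ^ 2 := by
    rw [eucNormSq, EuclideanSpace.real_norm_sq_eq]; ring
  rw [divW, (weighted_fderiv_powKernel_fst_eventuallyEq _ b hz).fderiv_eq,
    fderiv_vertFlux_fst _ b hz]
  rw [Finset.sum_congr rfl fun i _ => by
    rw [(weighted_fderiv_powKernel_single_eventuallyEq _ b i hz).fderiv_eq,
      fderiv_horizFlux_single b i hz]]
  rw [← Finset.mul_sum, Finset.sum_sub_distrib, ← Finset.sum_mul, ← Finset.mul_sum, hx,
    Finset.sum_const, Finset.card_univ, Fintype.card_fin, nsmul_eq_mul]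
  linear_combination (4 * b * (b + 1) * z.1) * hρ

end

theorem poisson_kernel_divW_eq_zero_general (n : ℕ) (γ : ℝ)
    (z : ℝ × EuclideanSpace ℝ (Fin n)) (hz : 0 < z.1) :
    divW γ (fun p : ℝ × EuclideanSpace ℝ (Fin n) =>
      p.1 ^ (2 * γ) / (p.1 ^ 2 + ‖p.2‖ ^ 2) ^ (((n : ℝ) + 2 * γ) / 2)) z = 0 := by
  have hK : (fun p : ℝ × EuclideanSpace ℝ (Fin n) =>
      p.1 ^ (2 * γ) / (p.1 ^ 2 + ‖p.2‖ ^ 2) ^ (((n : ℝ) + 2 * γ) / 2)) =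
      powKernel (2 * γ) (((n : ℝ) + 2 * γ) / 2) := by
    ext p
    rw [powKernel, eucNormSq, rpow_neg (by positivity), div_eq_mul_inv]
  rw [hK, divW_powKernel γ _ hz]
  ring

/-- The Caffarelli–Silvestre Poisson kernel
`K(y,x) = y^{2γ} / (y² + |x|²)^{(n+2γ)/2}` is `D`-harmonic on the open
upper half space: `div(y^{1-2γ} ∇K) = 0` wherever `y > 0`. -/
theorem poisson_kernel_divW_eq_zero (n : ℕ) (hn : 1 ≤ n) (γ : ℝ)
    (h0 : 0 < γ) (h1 : γ < 1)
    (z : ℝ × EuclideanSpace ℝ (Fin n)) (hz : 0 < z.1) :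
    divW γ (fun p : ℝ × EuclideanSpace ℝ (Fin n) =>
      p.1 ^ (2 * γ) / (p.1 ^ 2 + ‖p.2‖ ^ 2) ^ (((n : ℝ) + 2 * γ) / 2)) z = 0 :=
  poisson_kernel_divW_eq_zero_general n γ z hz
end

section
/- Let n ≥ 1, γ ∈ (0,1). Suppose e : S^n_+ → ℝ is the restriction to the upper unit hemisphere of a smooth function on ℝ^{n+1}_+ that is homogeneous of degree k and satisfies div(y^{1-2γ}∇e) = 0 on the upper half space. Then on S^n_+, e satisfies -div_{S^n_+}(y^{1-2γ} ∇_{S^n_+} e) = k(k + n - 2γ) y^{1-2γ} e, where y is the last coordinate function restricted to the sphere. -/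
open Topology


open Real

/-- The extrinsic weighted divergence `div(W ∇F)` with the degree-zero homogeneous
weight `W(z) = (y/|z|)^{1-2γ}`, used to represent the intrinsic operator
`div_{S^n_+}(y^{1-2γ} ∇_{S^n_+} ·)` on the unit hemisphere: for a function `e` on
the half space, `F(z) = |z|^{-k} e(z)` is the degree-zero homogeneous extension of
the restriction of `e` (homogeneous of degree `k`) to the hemisphere, and on the
hemisphere `div(W ∇F) = div_{S^n_+}(y^{1-2γ} ∇_{S^n_+} (e|_{S^n_+}))`. -/
noncomputable def sphDivW {n : ℕ} (γ k : ℝ) (e : ℝ × EuclideanSpace ℝ (Fin n) → ℝ)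
    (σ : ℝ × EuclideanSpace ℝ (Fin n)) : ℝ :=
  fderiv ℝ (fun p : ℝ × EuclideanSpace ℝ (Fin n) =>
      (p.1 / Real.sqrt (p.1 ^ 2 + ‖p.2‖ ^ 2)) ^ (1 - 2 * γ) *
        fderiv ℝ (fun q : ℝ × EuclideanSpace ℝ (Fin n) =>
          Real.sqrt (q.1 ^ 2 + ‖q.2‖ ^ 2) ^ (-k) * e q) p (1, 0)) σ (1, 0)
    + ∑ i : Fin n,
      fderiv ℝ (fun p : ℝ × EuclideanSpace ℝ (Fin n) =>
          (p.1 / Real.sqrt (p.1 ^ 2 + ‖p.2‖ ^ 2)) ^ (1 - 2 * γ) *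
            fderiv ℝ (fun q : ℝ × EuclideanSpace ℝ (Fin n) =>
              Real.sqrt (q.1 ^ 2 + ‖q.2‖ ^ 2) ^ (-k) * e q) p
              (0, EuclideanSpace.single i 1)) σ (0, EuclideanSpace.single i 1)

namespace SphAux
variable {n : ℕ}

noncomputable def rr (p : ℝ × EuclideanSpace ℝ (Fin n)) : ℝ := Real.sqrt (p.1 ^ 2 + ‖p.2‖ ^ 2)

noncomputable def Bp (p : ℝ × EuclideanSpace ℝ (Fin n)) : (ℝ × EuclideanSpace ℝ (Fin n)) →L[ℝ] ℝ :=
  p.1 • (ContinuousLinearMap.fst ℝ ℝ (EuclideanSpace ℝ (Fin n))) +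
    (innerSL ℝ p.2).comp (ContinuousLinearMap.snd ℝ ℝ (EuclideanSpace ℝ (Fin n)))

lemma Bp_apply (p v : ℝ × EuclideanSpace ℝ (Fin n)) :
    Bp p v = p.1 * v.1 + inner ℝ p.2 v.2 := by
  simp [Bp]

lemma Bp_symm (p v : ℝ × EuclideanSpace ℝ (Fin n)) : Bp p v = Bp v p := by
  rw [Bp_apply, Bp_apply, real_inner_comm]; ring

lemma rr_pos {p : ℝ × EuclideanSpace ℝ (Fin n)} (h : 0 < p.1) : 0 < rr p :=
  Real.sqrt_pos.2 (by positivity)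

lemma hasFDerivAt_sq (p : ℝ × EuclideanSpace ℝ (Fin n)) :
    HasFDerivAt (fun p : ℝ × EuclideanSpace ℝ (Fin n) => p.1 ^ 2 + ‖p.2‖ ^ 2)
      ((2 : ℝ) • Bp p) p := by
  have h1 : HasFDerivAt (fun p : ℝ × EuclideanSpace ℝ (Fin n) => p.1 ^ 2)
      (((2 : ℕ) * p.1 ^ 1) • ContinuousLinearMap.fst ℝ ℝ (EuclideanSpace ℝ (Fin n))) p :=
    (hasDerivAt_pow 2 p.1).comp_hasFDerivAt p (hasFDerivAt_fst)
  have h2 := (hasFDerivAt_snd (𝕜 := ℝ) (p := p)).norm_sq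
  have := h1.add h2
  refine this.congr_fderiv ?_
  symm
  refine ContinuousLinearMap.ext fun v => ?_
  simp [Bp, two_smul]
  ring

lemma hasFDerivAt_rr {p : ℝ × EuclideanSpace ℝ (Fin n)} (h : 0 < p.1) :
    HasFDerivAt (rr (n := n)) ((rr p)⁻¹ • Bp p) p := by
  have hne : p.1 ^ 2 + ‖p.2‖ ^ 2 ≠ 0 := by positivity
  have := (Real.hasDerivAt_sqrt hne).comp_hasFDerivAt p (hasFDerivAt_sq p)
  refine this.congr_fderiv ?_
  symm
  rw [smul_smul]
  congr 1
  rw [show Real.sqrt (p.1 ^ 2 + ‖p.2‖ ^ 2) = rr p from rfl]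
  field_simp

lemma hasFDerivAt_rr_rpow {p : ℝ × EuclideanSpace ℝ (Fin n)} (h : 0 < p.1) (a : ℝ) :
    HasFDerivAt (fun p => rr (n := n) p ^ a) ((a * rr p ^ (a - 2)) • Bp p) p := by
  have hr := rr_pos h
  have := (Real.hasDerivAt_rpow_const (x := rr p) (p := a)
    (Or.inl hr.ne')).comp_hasFDerivAt p (hasFDerivAt_rr h)
  refine this.congr_fderiv ?_
  symm
  rw [smul_smul]
  congr 1
  rw [show a - 2 = a - 1 - 1 by ring, Real.rpow_sub hr, Real.rpow_one]
  field_simp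

lemma hasFDerivAt_fst_rpow {p : ℝ × EuclideanSpace ℝ (Fin n)} (h : 0 < p.1) (a : ℝ) :
    HasFDerivAt (fun p : ℝ × EuclideanSpace ℝ (Fin n) => p.1 ^ a)
      ((a * p.1 ^ (a - 1)) • ContinuousLinearMap.fst ℝ ℝ (EuclideanSpace ℝ (Fin n))) p :=
  (Real.hasDerivAt_rpow_const (Or.inl h.ne')).comp_hasFDerivAt p hasFDerivAt_fst

lemma contDiffAt_rr {p : ℝ × EuclideanSpace ℝ (Fin n)} (h : 0 < p.1) {m : WithTop ℕ∞} :
    ContDiffAt ℝ m (rr (n := n)) p := by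
  have hne : p.1 ^ 2 + ‖p.2‖ ^ 2 ≠ 0 := by positivity
  exact (Real.contDiffAt_sqrt hne).comp p
    ((contDiffAt_fst.pow 2).add (contDiffAt_snd.norm_sq ℝ))

lemma contDiffAt_rr_rpow {p : ℝ × EuclideanSpace ℝ (Fin n)} (h : 0 < p.1) {m : WithTop ℕ∞} (a : ℝ) :
    ContDiffAt ℝ m (fun p => rr (n := n) p ^ a) p :=
  (contDiffAt_rr h).rpow_const_of_ne (rr_pos h).ne'

noncomputable def FF (k : ℝ) (e : ℝ × EuclideanSpace ℝ (Fin n) → ℝ) :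
    ℝ × EuclideanSpace ℝ (Fin n) → ℝ :=
  fun q => Real.sqrt (q.1 ^ 2 + ‖q.2‖ ^ 2) ^ (-k) * e q

noncomputable def gg (γ k : ℝ) (e : ℝ × EuclideanSpace ℝ (Fin n) → ℝ)
    (v : ℝ × EuclideanSpace ℝ (Fin n)) : ℝ × EuclideanSpace ℝ (Fin n) → ℝ :=
  fun p => (p.1 / Real.sqrt (p.1 ^ 2 + ‖p.2‖ ^ 2)) ^ (1 - 2 * γ) * fderiv ℝ (FF k e) p v

lemma FF_eq (k : ℝ) (e : ℝ × EuclideanSpace ℝ (Fin n) → ℝ) (q) :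
    FF k e q = rr q ^ (-k) * e q := rfl

variable {k γ : ℝ} {e : ℝ × EuclideanSpace ℝ (Fin n) → ℝ}

lemma contDiffAt_FF (he : ContDiffOn ℝ (⊤ : ℕ∞) e {p : ℝ × EuclideanSpace ℝ (Fin n) | 0 < p.1}) {p : ℝ × EuclideanSpace ℝ (Fin n)} (hp : 0 < p.1) {m : WithTop ℕ∞}
    (hm : m ≠ ⊤) : ContDiffAt ℝ m (FF k e) p := by
  have heU : {p : ℝ × EuclideanSpace ℝ (Fin n) | 0 < p.1} ∈ 𝓝 p :=
    (isOpen_lt continuous_const continuous_fst).mem_nhds hp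
  have hem : ContDiffAt ℝ m e p := (he.contDiffAt heU).of_le (by lift m to ℕ∞ using hm with a; exact_mod_cast (le_top : a ≤ ⊤))
  exact (contDiffAt_rr_rpow hp (-k)).mul hem

lemma diffAt_FF (he : ContDiffOn ℝ (⊤ : ℕ∞) e {p : ℝ × EuclideanSpace ℝ (Fin n) | 0 < p.1}) {p : ℝ × EuclideanSpace ℝ (Fin n)} (hp : 0 < p.1) :
    DifferentiableAt ℝ (FF k e) p :=
  (contDiffAt_FF he hp (m := 1) (by simp)).differentiableAt one_ne_zero

lemma diffAt_fderiv_FF (he : ContDiffOn ℝ (⊤ : ℕ∞) e {p : ℝ × EuclideanSpace ℝ (Fin n) | 0 < p.1}) {p : ℝ × EuclideanSpace ℝ (Fin n)} (hp : 0 < p.1)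
    (v : ℝ × EuclideanSpace ℝ (Fin n)) :
    DifferentiableAt ℝ (fun q => fderiv ℝ (FF k e) q v) p := by
  have h2 : ContDiffAt ℝ 2 (FF k e) p := contDiffAt_FF he hp (by simp)
  have h1 : ContDiffAt ℝ 1 (fderiv ℝ (FF k e)) p := h2.fderiv_right (by norm_num)
  exact (h1.differentiableAt one_ne_zero).clm_apply (differentiableAt_const v)

lemma diffAt_gg (he : ContDiffOn ℝ (⊤ : ℕ∞) e {p : ℝ × EuclideanSpace ℝ (Fin n) | 0 < p.1}) {p : ℝ × EuclideanSpace ℝ (Fin n)} (hp : 0 < p.1)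
    (v : ℝ × EuclideanSpace ℝ (Fin n)) :
    DifferentiableAt ℝ (gg γ k e v) p := by
  have hrp := rr_pos (n := n) hp
  have d1 : DifferentiableAt ℝ (fun p : ℝ × EuclideanSpace ℝ (Fin n) => p.1) p :=
    differentiableAt_fst
  have d2 : DifferentiableAt ℝ (fun p : ℝ × EuclideanSpace ℝ (Fin n) =>
      Real.sqrt (p.1 ^ 2 + ‖p.2‖ ^ 2)) p := (hasFDerivAt_rr hp).differentiableAt
  have hq : DifferentiableAt ℝ (fun p : ℝ × EuclideanSpace ℝ (Fin n) =>
      p.1 / Real.sqrt (p.1 ^ 2 + ‖p.2‖ ^ 2)) p := by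
    simpa [div_eq_mul_inv] using d1.fun_mul (d2.fun_inv hrp.ne')
  have hpos : p.1 / rr p ≠ 0 := (div_pos hp hrp).ne'
  exact (hq.rpow_const (Or.inl hpos)).mul (diffAt_fderiv_FF he hp v)


lemma sqrt_eq_rr (p : ℝ × EuclideanSpace ℝ (Fin n)) :
    Real.sqrt (p.1 ^ 2 + ‖p.2‖ ^ 2) = rr p := rfl

lemma hasFDerivAt_Bpv (σ v : ℝ × EuclideanSpace ℝ (Fin n)) :
    HasFDerivAt (fun p => Bp p v) (Bp v) σ := by
  have h : (fun p : ℝ × EuclideanSpace ℝ (Fin n) => Bp p v) = fun p => Bp v p :=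
    funext fun p => Bp_symm p v
  rw [h]
  exact (Bp v).hasFDerivAt

lemma e_eq_rpow_FF {q : ℝ × EuclideanSpace ℝ (Fin n)} (hq : 0 < q.1) :
    e q = rr q ^ k * FF k e q := by
  rw [FF_eq, ← mul_assoc, ← Real.rpow_add (rr_pos hq), add_neg_cancel, Real.rpow_zero, one_mul]

lemma fderiv_e_eq (he : ContDiffOn ℝ (⊤ : ℕ∞) e {p : ℝ × EuclideanSpace ℝ (Fin n) | 0 < p.1})
    {p : ℝ × EuclideanSpace ℝ (Fin n)} (hp : 0 < p.1) :
    fderiv ℝ e p = (rr p ^ k) • fderiv ℝ (FF k e) p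
      + (FF k e p) • ((k * rr p ^ (k - 2)) • Bp p) := by
  have hU : {p : ℝ × EuclideanSpace ℝ (Fin n) | 0 < p.1} ∈ 𝓝 p :=
    (isOpen_lt continuous_const continuous_fst).mem_nhds hp
  have heq : e =ᶠ[𝓝 p] fun q => rr q ^ k * FF k e q := by
    filter_upwards [hU] with q hq
    exact e_eq_rpow_FF (k := k) hq
  rw [heq.fderiv_eq]
  exact ((hasFDerivAt_rr_rpow hp k).mul ((diffAt_FF he hp).hasFDerivAt)).fderiv

lemma key_eventually (he : ContDiffOn ℝ (⊤ : ℕ∞) e {p : ℝ × EuclideanSpace ℝ (Fin n) | 0 < p.1})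
    (σ : ℝ × EuclideanSpace ℝ (Fin n)) (hσ : 0 < σ.1) (v : ℝ × EuclideanSpace ℝ (Fin n)) :
    (fun p : ℝ × EuclideanSpace ℝ (Fin n) => p.1 ^ (1 - 2 * γ) * fderiv ℝ e p v) =ᶠ[𝓝 σ]
      fun p => k * (p.1 ^ (1 - 2 * γ) * (rr p ^ (k - 2) * FF k e p) * Bp p v)
        + rr p ^ (k + (1 - 2 * γ)) * gg γ k e v p := by
  have hU : {p : ℝ × EuclideanSpace ℝ (Fin n) | 0 < p.1} ∈ 𝓝 σ :=
    (isOpen_lt continuous_const continuous_fst).mem_nhds hσ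
  filter_upwards [hU] with p hp
  rw [fderiv_e_eq (k := k) he hp]
  have hr := rr_pos (n := n) hp
  have hrm : (0:ℝ) < rr p ^ (1 - 2 * γ) := Real.rpow_pos_of_pos hr _
  have hdiv : (p.1 / rr p) ^ (1 - 2 * γ) = p.1 ^ (1 - 2 * γ) / rr p ^ (1 - 2 * γ) :=
    Real.div_rpow hp.le hr.le _
  have hadd : rr p ^ (k + (1 - 2 * γ)) = rr p ^ k * rr p ^ (1 - 2 * γ) :=
    Real.rpow_add hr k (1 - 2 * γ)
  simp only [gg, sqrt_eq_rr, ContinuousLinearMap.add_apply, ContinuousLinearMap.smul_apply,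
    smul_eq_mul, hdiv, hadd]
  field_simp
  ring

lemma step (he : ContDiffOn ℝ (⊤ : ℕ∞) e {p : ℝ × EuclideanSpace ℝ (Fin n) | 0 < p.1})
    (σ : ℝ × EuclideanSpace ℝ (Fin n)) (hσ : 0 < σ.1) (v : ℝ × EuclideanSpace ℝ (Fin n)) :
    fderiv ℝ (fun p : ℝ × EuclideanSpace ℝ (Fin n) =>
        p.1 ^ (1 - 2 * γ) * fderiv ℝ e p v) σ v
      = k * ((σ.1 ^ (1 - 2 * γ) * (rr σ ^ (k - 2) * fderiv ℝ (FF k e) σ v)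
            + σ.1 ^ (1 - 2 * γ) * ((k - 2) * rr σ ^ (k - 2 - 2) * Bp σ v) * FF k e σ
            + (1 - 2 * γ) * σ.1 ^ (1 - 2 * γ - 1) * v.1 * (rr σ ^ (k - 2) * FF k e σ)) * Bp σ v
          + σ.1 ^ (1 - 2 * γ) * (rr σ ^ (k - 2) * FF k e σ) * Bp v v)
        + ((k + (1 - 2 * γ)) * rr σ ^ (k + (1 - 2 * γ) - 2) * Bp σ v * gg γ k e v σ
          + rr σ ^ (k + (1 - 2 * γ)) * fderiv ℝ (gg γ k e v) σ v) := by
  have h1 := hasFDerivAt_fst_rpow hσ (1 - 2 * γ)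
  have h2 := hasFDerivAt_rr_rpow hσ (k - 2)
  have h3 := (diffAt_FF (k := k) he hσ).hasFDerivAt
  have h23 := h2.mul h3
  have h123 := h1.mul h23
  have hψ := hasFDerivAt_Bpv σ v
  have hA := (h123.mul hψ).const_mul k
  have h4 := hasFDerivAt_rr_rpow hσ (k + (1 - 2 * γ))
  have h5 := (diffAt_gg (γ := γ) (k := k) he hσ v).hasFDerivAt
  have hB := h4.mul h5
  have htot : HasFDerivAt (fun p : ℝ × EuclideanSpace ℝ (Fin n) =>
      p.1 ^ (1 - 2 * γ) * fderiv ℝ e p v) _ σ :=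
    (hA.add hB).congr_of_eventuallyEq (key_eventually (k := k) he σ hσ v)
  rw [htot.fderiv]
  simp only [ContinuousLinearMap.add_apply, ContinuousLinearMap.smul_apply,
    ContinuousLinearMap.coe_smul', Pi.smul_apply, ContinuousLinearMap.coe_fst',
    smul_eq_mul, Pi.mul_apply]
  ring

lemma euler_FF (he : ContDiffOn ℝ (⊤ : ℕ∞) e {p : ℝ × EuclideanSpace ℝ (Fin n) | 0 < p.1})
    (hhom : ∀ t : ℝ, 0 < t → ∀ p : ℝ × EuclideanSpace ℝ (Fin n), 0 < p.1 →
      e (t • p) = t ^ k * e p)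
    {σ : ℝ × EuclideanSpace ℝ (Fin n)} (hσ : 0 < σ.1) :
    fderiv ℝ (FF k e) σ σ = 0 := by
  have hF := (diffAt_FF (k := k) he hσ).hasFDerivAt
  have hsm : HasDerivAt (fun t : ℝ => t • σ) σ 1 := by
    simpa using (hasDerivAt_id (1:ℝ)).smul_const σ
  have hF' : HasFDerivAt (FF k e) (fderiv ℝ (FF k e) σ) ((fun t : ℝ => t • σ) 1) := by
    simpa using hF
  have hcomp : HasDerivAt (fun t : ℝ => FF k e (t • σ)) (fderiv ℝ (FF k e) σ σ) 1 :=
    hF'.comp_hasDerivAt (f := fun t : ℝ => t • σ) 1 hsm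
  have hconst : (fun t : ℝ => FF k e (t • σ)) =ᶠ[𝓝 (1:ℝ)] fun _ => FF k e σ := by
    filter_upwards [eventually_gt_nhds zero_lt_one] with t ht
    have hrr : rr (t • σ) = t * rr σ := by
      rw [← sqrt_eq_rr, ← sqrt_eq_rr]
      have h1 : (t • σ).1 = t * σ.1 := rfl
      have h2 : (t • σ).2 = t • σ.2 := rfl
      rw [h1, h2, norm_smul, Real.norm_eq_abs, mul_pow, mul_pow, sq_abs, ← mul_add,
        Real.sqrt_mul (sq_nonneg t), Real.sqrt_sq ht.le]
    rw [FF_eq, FF_eq, hrr, Real.mul_rpow ht.le (rr_pos hσ).le, hhom t ht σ hσ]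
    have ht1 : t ^ (-k) * t ^ k = 1 := by
      rw [← Real.rpow_add ht]; simp
    calc t ^ (-k) * rr σ ^ (-k) * (t ^ k * e σ)
        = (t ^ (-k) * t ^ k) * (rr σ ^ (-k) * e σ) := by ring
      _ = rr σ ^ (-k) * e σ := by rw [ht1, one_mul]
  have h0 : HasDerivAt (fun t : ℝ => FF k e (t • σ)) 0 1 :=
    (hasDerivAt_const 1 (FF k e σ)).congr_of_eventuallyEq hconst
  exact hcomp.unique h0

lemma euclid_decomp (x : EuclideanSpace ℝ (Fin n)) :
    ∑ i, x i • EuclideanSpace.single i (1:ℝ) = x := by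
  ext j
  rw [WithLp.ofLp_sum, Finset.sum_apply]
  simp [EuclideanSpace.single_apply]

lemma clm_decomp (L : (ℝ × EuclideanSpace ℝ (Fin n)) →L[ℝ] ℝ)
    (p : ℝ × EuclideanSpace ℝ (Fin n)) :
    L p = p.1 * L (1, 0) + ∑ i, p.2 i * L (0, EuclideanSpace.single i 1) := by
  have hp : p = p.1 • ((1:ℝ), (0:EuclideanSpace ℝ (Fin n)))
      + ∑ i, p.2 i • ((0:ℝ), EuclideanSpace.single i (1:ℝ)) := by
    refine Prod.ext ?_ ?_
    · simp [Prod.fst_sum]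
    · simp [Prod.snd_sum, euclid_decomp]
  conv_lhs => rw [hp]
  simp only [map_add, map_smul, map_sum, smul_eq_mul]

end SphAux

/-- A `D`-harmonic function on the upper half space, homogeneous of degree `k`,
restricts on the upper unit hemisphere to an eigenfunction of the weighted
spherical operator: `-div_{S^n_+}(y^{1-2γ} ∇_{S^n_+} e) = k(k+n-2γ) y^{1-2γ} e`. -/
theorem harmonic_homogeneous_spherical_eigen (n : ℕ) (hn : 1 ≤ n) (γ : ℝ)
    (h0 : 0 < γ) (h1 : γ < 1) (k : ℝ)
    (e : ℝ × EuclideanSpace ℝ (Fin n) → ℝ)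
    (he : ContDiffOn ℝ (⊤ : ℕ∞) e {p : ℝ × EuclideanSpace ℝ (Fin n) | 0 < p.1})
    (hhom : ∀ t : ℝ, 0 < t → ∀ p : ℝ × EuclideanSpace ℝ (Fin n), 0 < p.1 →
      e (t • p) = t ^ k * e p)
    (hharm : ∀ p : ℝ × EuclideanSpace ℝ (Fin n), 0 < p.1 → divW γ e p = 0)
    (σ : ℝ × EuclideanSpace ℝ (Fin n)) (hσ : 0 < σ.1)
    (hσ1 : σ.1 ^ 2 + ‖σ.2‖ ^ 2 = 1) :
    -sphDivW γ k e σ = k * (k + (n : ℝ) - 2 * γ) * σ.1 ^ (1 - 2 * γ) * e σ := by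

  classical
  have hrσ : SphAux.rr σ = 1 := by
    rw [← SphAux.sqrt_eq_rr, hσ1, Real.sqrt_one]
  have hFσ : SphAux.FF k e σ = e σ := by
    rw [SphAux.FF_eq, hrσ, Real.one_rpow, one_mul]
  have hpow : σ.1 ^ (1 - 2 * γ - 1) * σ.1 = σ.1 ^ (1 - 2 * γ) := by
    rw [← Real.rpow_add_one hσ.ne' (1 - 2 * γ - 1)]
    congr 1
    ring
  have hv0 : fderiv ℝ (fun p : ℝ × EuclideanSpace ℝ (Fin n) =>
      p.1 ^ (1 - 2 * γ) * fderiv ℝ e p (1, 0)) σ (1, 0)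
    = k * ((σ.1 ^ (1 - 2 * γ) * (SphAux.rr σ ^ (k - 2) * fderiv ℝ (SphAux.FF k e) σ ((1 : ℝ), (0 : EuclideanSpace ℝ (Fin n))))
            + σ.1 ^ (1 - 2 * γ) * ((k - 2) * SphAux.rr σ ^ (k - 2 - 2) * SphAux.Bp σ ((1 : ℝ), (0 : EuclideanSpace ℝ (Fin n)))) * SphAux.FF k e σ
            + (1 - 2 * γ) * σ.1 ^ (1 - 2 * γ - 1) * (1 : ℝ) * (SphAux.rr σ ^ (k - 2) * SphAux.FF k e σ)) * SphAux.Bp σ ((1 : ℝ), (0 : EuclideanSpace ℝ (Fin n)))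
          + σ.1 ^ (1 - 2 * γ) * (SphAux.rr σ ^ (k - 2) * SphAux.FF k e σ) * SphAux.Bp ((1 : ℝ), (0 : EuclideanSpace ℝ (Fin n))) ((1 : ℝ), (0 : EuclideanSpace ℝ (Fin n))))
        + ((k + (1 - 2 * γ)) * SphAux.rr σ ^ (k + (1 - 2 * γ) - 2) * SphAux.Bp σ ((1 : ℝ), (0 : EuclideanSpace ℝ (Fin n))) * SphAux.gg γ k e ((1 : ℝ), (0 : EuclideanSpace ℝ (Fin n))) σ
          + SphAux.rr σ ^ (k + (1 - 2 * γ)) * fderiv ℝ (SphAux.gg γ k e ((1 : ℝ), (0 : EuclideanSpace ℝ (Fin n)))) σ ((1 : ℝ), (0 : EuclideanSpace ℝ (Fin n)))) := SphAux.step (γ := γ) (k := k) he σ hσ _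
  have hsumstep : (∑ i : Fin n, fderiv ℝ (fun p : ℝ × EuclideanSpace ℝ (Fin n) =>
        p.1 ^ (1 - 2 * γ) * fderiv ℝ e p (0, EuclideanSpace.single i 1)) σ
        (0, EuclideanSpace.single i 1))
      = ∑ i : Fin n, (k * ((σ.1 ^ (1 - 2 * γ) * (SphAux.rr σ ^ (k - 2) * fderiv ℝ (SphAux.FF k e) σ ((0 : ℝ), EuclideanSpace.single i (1 : ℝ)))
            + σ.1 ^ (1 - 2 * γ) * ((k - 2) * SphAux.rr σ ^ (k - 2 - 2) * SphAux.Bp σ ((0 : ℝ), EuclideanSpace.single i (1 : ℝ))) * SphAux.FF k e σ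
            + (1 - 2 * γ) * σ.1 ^ (1 - 2 * γ - 1) * (0 : ℝ) * (SphAux.rr σ ^ (k - 2) * SphAux.FF k e σ)) * SphAux.Bp σ ((0 : ℝ), EuclideanSpace.single i (1 : ℝ))
          + σ.1 ^ (1 - 2 * γ) * (SphAux.rr σ ^ (k - 2) * SphAux.FF k e σ) * SphAux.Bp ((0 : ℝ), EuclideanSpace.single i (1 : ℝ)) ((0 : ℝ), EuclideanSpace.single i (1 : ℝ)))
        + ((k + (1 - 2 * γ)) * SphAux.rr σ ^ (k + (1 - 2 * γ) - 2) * SphAux.Bp σ ((0 : ℝ), EuclideanSpace.single i (1 : ℝ)) * SphAux.gg γ k e ((0 : ℝ), EuclideanSpace.single i (1 : ℝ)) σ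
          + SphAux.rr σ ^ (k + (1 - 2 * γ)) * fderiv ℝ (SphAux.gg γ k e ((0 : ℝ), EuclideanSpace.single i (1 : ℝ))) σ ((0 : ℝ), EuclideanSpace.single i (1 : ℝ)))) :=
    Finset.sum_congr rfl fun i _ => SphAux.step (γ := γ) (k := k) he σ hσ _
  have hh2 : (k * ((σ.1 ^ (1 - 2 * γ) * (SphAux.rr σ ^ (k - 2) * fderiv ℝ (SphAux.FF k e) σ ((1 : ℝ), (0 : EuclideanSpace ℝ (Fin n))))
            + σ.1 ^ (1 - 2 * γ) * ((k - 2) * SphAux.rr σ ^ (k - 2 - 2) * SphAux.Bp σ ((1 : ℝ), (0 : EuclideanSpace ℝ (Fin n)))) * SphAux.FF k e σ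
            + (1 - 2 * γ) * σ.1 ^ (1 - 2 * γ - 1) * (1 : ℝ) * (SphAux.rr σ ^ (k - 2) * SphAux.FF k e σ)) * SphAux.Bp σ ((1 : ℝ), (0 : EuclideanSpace ℝ (Fin n)))
          + σ.1 ^ (1 - 2 * γ) * (SphAux.rr σ ^ (k - 2) * SphAux.FF k e σ) * SphAux.Bp ((1 : ℝ), (0 : EuclideanSpace ℝ (Fin n))) ((1 : ℝ), (0 : EuclideanSpace ℝ (Fin n))))
        + ((k + (1 - 2 * γ)) * SphAux.rr σ ^ (k + (1 - 2 * γ) - 2) * SphAux.Bp σ ((1 : ℝ), (0 : EuclideanSpace ℝ (Fin n))) * SphAux.gg γ k e ((1 : ℝ), (0 : EuclideanSpace ℝ (Fin n))) σ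
          + SphAux.rr σ ^ (k + (1 - 2 * γ)) * fderiv ℝ (SphAux.gg γ k e ((1 : ℝ), (0 : EuclideanSpace ℝ (Fin n)))) σ ((1 : ℝ), (0 : EuclideanSpace ℝ (Fin n))))) + ∑ i : Fin n, (k * ((σ.1 ^ (1 - 2 * γ) * (SphAux.rr σ ^ (k - 2) * fderiv ℝ (SphAux.FF k e) σ ((0 : ℝ), EuclideanSpace.single i (1 : ℝ)))
            + σ.1 ^ (1 - 2 * γ) * ((k - 2) * SphAux.rr σ ^ (k - 2 - 2) * SphAux.Bp σ ((0 : ℝ), EuclideanSpace.single i (1 : ℝ))) * SphAux.FF k e σ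
            + (1 - 2 * γ) * σ.1 ^ (1 - 2 * γ - 1) * (0 : ℝ) * (SphAux.rr σ ^ (k - 2) * SphAux.FF k e σ)) * SphAux.Bp σ ((0 : ℝ), EuclideanSpace.single i (1 : ℝ))
          + σ.1 ^ (1 - 2 * γ) * (SphAux.rr σ ^ (k - 2) * SphAux.FF k e σ) * SphAux.Bp ((0 : ℝ), EuclideanSpace.single i (1 : ℝ)) ((0 : ℝ), EuclideanSpace.single i (1 : ℝ)))
        + ((k + (1 - 2 * γ)) * SphAux.rr σ ^ (k + (1 - 2 * γ) - 2) * SphAux.Bp σ ((0 : ℝ), EuclideanSpace.single i (1 : ℝ)) * SphAux.gg γ k e ((0 : ℝ), EuclideanSpace.single i (1 : ℝ)) σ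
          + SphAux.rr σ ^ (k + (1 - 2 * γ)) * fderiv ℝ (SphAux.gg γ k e ((0 : ℝ), EuclideanSpace.single i (1 : ℝ))) σ ((0 : ℝ), EuclideanSpace.single i (1 : ℝ)))) = 0 := by
    rw [← hv0, ← hsumstep]
    exact hharm σ hσ
  have heuler : σ.1 * fderiv ℝ (SphAux.FF k e) σ ((1 : ℝ), (0 : EuclideanSpace ℝ (Fin n))) + ∑ i : Fin n, σ.2 i * fderiv ℝ (SphAux.FF k e) σ ((0 : ℝ), EuclideanSpace.single i (1 : ℝ)) = 0 := by
    have hd := SphAux.clm_decomp (fderiv ℝ (SphAux.FF k e) σ) σ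
    have h0' := SphAux.euler_FF (k := k) he hhom hσ
    rw [h0'] at hd
    linarith [hd]
  have hnorm : σ.1 ^ 2 + ∑ i : Fin n, (σ.2 i) ^ 2 = 1 := by
    have hns : ∑ i : Fin n, (σ.2 i) ^ 2 = ‖σ.2‖ ^ 2 := by
      rw [EuclideanSpace.norm_eq, Real.sq_sqrt (by positivity)]
      simp [Real.norm_eq_abs, sq_abs]
    rw [hns]
    exact hσ1
  have hE0 : (k * ((σ.1 ^ (1 - 2 * γ) * (SphAux.rr σ ^ (k - 2) * fderiv ℝ (SphAux.FF k e) σ ((1 : ℝ), (0 : EuclideanSpace ℝ (Fin n))))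
            + σ.1 ^ (1 - 2 * γ) * ((k - 2) * SphAux.rr σ ^ (k - 2 - 2) * SphAux.Bp σ ((1 : ℝ), (0 : EuclideanSpace ℝ (Fin n)))) * SphAux.FF k e σ
            + (1 - 2 * γ) * σ.1 ^ (1 - 2 * γ - 1) * (1 : ℝ) * (SphAux.rr σ ^ (k - 2) * SphAux.FF k e σ)) * SphAux.Bp σ ((1 : ℝ), (0 : EuclideanSpace ℝ (Fin n)))
          + σ.1 ^ (1 - 2 * γ) * (SphAux.rr σ ^ (k - 2) * SphAux.FF k e σ) * SphAux.Bp ((1 : ℝ), (0 : EuclideanSpace ℝ (Fin n))) ((1 : ℝ), (0 : EuclideanSpace ℝ (Fin n))))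
        + ((k + (1 - 2 * γ)) * SphAux.rr σ ^ (k + (1 - 2 * γ) - 2) * SphAux.Bp σ ((1 : ℝ), (0 : EuclideanSpace ℝ (Fin n))) * SphAux.gg γ k e ((1 : ℝ), (0 : EuclideanSpace ℝ (Fin n))) σ
          + SphAux.rr σ ^ (k + (1 - 2 * γ)) * fderiv ℝ (SphAux.gg γ k e ((1 : ℝ), (0 : EuclideanSpace ℝ (Fin n)))) σ ((1 : ℝ), (0 : EuclideanSpace ℝ (Fin n))))) = (2 * k + (1 - 2 * γ)) * σ.1 ^ (1 - 2 * γ) * (σ.1 * fderiv ℝ (SphAux.FF k e) σ ((1 : ℝ), (0 : EuclideanSpace ℝ (Fin n)))) + k * (k - 2) * σ.1 ^ (1 - 2 * γ) * e σ * σ.1 ^ 2 + k * (σ.1 ^ (1 - 2 * γ) * e σ) + k * (1 - 2 * γ) * σ.1 ^ (1 - 2 * γ) * e σ + fderiv ℝ (SphAux.gg γ k e ((1 : ℝ), (0 : EuclideanSpace ℝ (Fin n)))) σ ((1 : ℝ), (0 : EuclideanSpace ℝ (Fin n))) := by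
    have hB1 : SphAux.Bp σ ((1 : ℝ), (0 : EuclideanSpace ℝ (Fin n))) = σ.1 := by
      rw [SphAux.Bp_apply]; simp
    have hB2 : SphAux.Bp (((1 : ℝ), (0 : EuclideanSpace ℝ (Fin n))) : ℝ × EuclideanSpace ℝ (Fin n)) ((1 : ℝ), (0 : EuclideanSpace ℝ (Fin n))) = 1 := by
      rw [SphAux.Bp_apply]; simp
    have hgg0 : SphAux.gg γ k e ((1 : ℝ), (0 : EuclideanSpace ℝ (Fin n))) σ = σ.1 ^ (1 - 2 * γ) * fderiv ℝ (SphAux.FF k e) σ ((1 : ℝ), (0 : EuclideanSpace ℝ (Fin n))) := by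
      show (σ.1 / Real.sqrt (σ.1 ^ 2 + ‖σ.2‖ ^ 2)) ^ (1 - 2 * γ) * _ = _
      rw [hσ1, Real.sqrt_one, div_one]
    rw [hB1, hB2, hgg0, hrσ, hFσ]
    simp only [Real.one_rpow]
    linear_combination (k * (1 - 2 * γ) * e σ) * hpow
  have key : ∀ i : Fin n, (k * ((σ.1 ^ (1 - 2 * γ) * (SphAux.rr σ ^ (k - 2) * fderiv ℝ (SphAux.FF k e) σ ((0 : ℝ), EuclideanSpace.single i (1 : ℝ)))
            + σ.1 ^ (1 - 2 * γ) * ((k - 2) * SphAux.rr σ ^ (k - 2 - 2) * SphAux.Bp σ ((0 : ℝ), EuclideanSpace.single i (1 : ℝ))) * SphAux.FF k e σ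
            + (1 - 2 * γ) * σ.1 ^ (1 - 2 * γ - 1) * (0 : ℝ) * (SphAux.rr σ ^ (k - 2) * SphAux.FF k e σ)) * SphAux.Bp σ ((0 : ℝ), EuclideanSpace.single i (1 : ℝ))
          + σ.1 ^ (1 - 2 * γ) * (SphAux.rr σ ^ (k - 2) * SphAux.FF k e σ) * SphAux.Bp ((0 : ℝ), EuclideanSpace.single i (1 : ℝ)) ((0 : ℝ), EuclideanSpace.single i (1 : ℝ)))
        + ((k + (1 - 2 * γ)) * SphAux.rr σ ^ (k + (1 - 2 * γ) - 2) * SphAux.Bp σ ((0 : ℝ), EuclideanSpace.single i (1 : ℝ)) * SphAux.gg γ k e ((0 : ℝ), EuclideanSpace.single i (1 : ℝ)) σ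
          + SphAux.rr σ ^ (k + (1 - 2 * γ)) * fderiv ℝ (SphAux.gg γ k e ((0 : ℝ), EuclideanSpace.single i (1 : ℝ))) σ ((0 : ℝ), EuclideanSpace.single i (1 : ℝ)))) = (2 * k + (1 - 2 * γ)) * σ.1 ^ (1 - 2 * γ) * (σ.2 i * fderiv ℝ (SphAux.FF k e) σ ((0 : ℝ), EuclideanSpace.single i (1 : ℝ))) + k * (k - 2) * σ.1 ^ (1 - 2 * γ) * e σ * (σ.2 i) ^ 2 + k * (σ.1 ^ (1 - 2 * γ) * e σ) + fderiv ℝ (SphAux.gg γ k e ((0 : ℝ), EuclideanSpace.single i (1 : ℝ))) σ ((0 : ℝ), EuclideanSpace.single i (1 : ℝ)) := by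
    intro i
    have hB3 : SphAux.Bp σ ((0 : ℝ), EuclideanSpace.single i (1 : ℝ)) = σ.2 i := by
      rw [SphAux.Bp_apply]; simp [EuclideanSpace.inner_single_right]
    have hB4 : SphAux.Bp (((0 : ℝ), EuclideanSpace.single i (1 : ℝ)) : ℝ × EuclideanSpace ℝ (Fin n)) ((0 : ℝ), EuclideanSpace.single i (1 : ℝ)) = 1 := by
      rw [SphAux.Bp_apply]; simp [EuclideanSpace.inner_single_right]
    have hggi : SphAux.gg γ k e ((0 : ℝ), EuclideanSpace.single i (1 : ℝ)) σ = σ.1 ^ (1 - 2 * γ) * fderiv ℝ (SphAux.FF k e) σ ((0 : ℝ), EuclideanSpace.single i (1 : ℝ)) := by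
      show (σ.1 / Real.sqrt (σ.1 ^ 2 + ‖σ.2‖ ^ 2)) ^ (1 - 2 * γ) * _ = _
      rw [hσ1, Real.sqrt_one, div_one]
    rw [hB3, hB4, hggi, hrσ, hFσ]
    simp only [Real.one_rpow]
    ring
  have hsum2 : (∑ i : Fin n, (k * ((σ.1 ^ (1 - 2 * γ) * (SphAux.rr σ ^ (k - 2) * fderiv ℝ (SphAux.FF k e) σ ((0 : ℝ), EuclideanSpace.single i (1 : ℝ)))
            + σ.1 ^ (1 - 2 * γ) * ((k - 2) * SphAux.rr σ ^ (k - 2 - 2) * SphAux.Bp σ ((0 : ℝ), EuclideanSpace.single i (1 : ℝ))) * SphAux.FF k e σ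
            + (1 - 2 * γ) * σ.1 ^ (1 - 2 * γ - 1) * (0 : ℝ) * (SphAux.rr σ ^ (k - 2) * SphAux.FF k e σ)) * SphAux.Bp σ ((0 : ℝ), EuclideanSpace.single i (1 : ℝ))
          + σ.1 ^ (1 - 2 * γ) * (SphAux.rr σ ^ (k - 2) * SphAux.FF k e σ) * SphAux.Bp ((0 : ℝ), EuclideanSpace.single i (1 : ℝ)) ((0 : ℝ), EuclideanSpace.single i (1 : ℝ)))
        + ((k + (1 - 2 * γ)) * SphAux.rr σ ^ (k + (1 - 2 * γ) - 2) * SphAux.Bp σ ((0 : ℝ), EuclideanSpace.single i (1 : ℝ)) * SphAux.gg γ k e ((0 : ℝ), EuclideanSpace.single i (1 : ℝ)) σ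
          + SphAux.rr σ ^ (k + (1 - 2 * γ)) * fderiv ℝ (SphAux.gg γ k e ((0 : ℝ), EuclideanSpace.single i (1 : ℝ))) σ ((0 : ℝ), EuclideanSpace.single i (1 : ℝ))))) = ∑ i : Fin n, ((2 * k + (1 - 2 * γ)) * σ.1 ^ (1 - 2 * γ) * (σ.2 i * fderiv ℝ (SphAux.FF k e) σ ((0 : ℝ), EuclideanSpace.single i (1 : ℝ))) + k * (k - 2) * σ.1 ^ (1 - 2 * γ) * e σ * (σ.2 i) ^ 2 + k * (σ.1 ^ (1 - 2 * γ) * e σ) + fderiv ℝ (SphAux.gg γ k e ((0 : ℝ), EuclideanSpace.single i (1 : ℝ))) σ ((0 : ℝ), EuclideanSpace.single i (1 : ℝ))) :=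
    Finset.sum_congr rfl fun i _ => key i
  have hBIG : (k * ((σ.1 ^ (1 - 2 * γ) * (SphAux.rr σ ^ (k - 2) * fderiv ℝ (SphAux.FF k e) σ ((1 : ℝ), (0 : EuclideanSpace ℝ (Fin n))))
            + σ.1 ^ (1 - 2 * γ) * ((k - 2) * SphAux.rr σ ^ (k - 2 - 2) * SphAux.Bp σ ((1 : ℝ), (0 : EuclideanSpace ℝ (Fin n)))) * SphAux.FF k e σ
            + (1 - 2 * γ) * σ.1 ^ (1 - 2 * γ - 1) * (1 : ℝ) * (SphAux.rr σ ^ (k - 2) * SphAux.FF k e σ)) * SphAux.Bp σ ((1 : ℝ), (0 : EuclideanSpace ℝ (Fin n)))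
          + σ.1 ^ (1 - 2 * γ) * (SphAux.rr σ ^ (k - 2) * SphAux.FF k e σ) * SphAux.Bp ((1 : ℝ), (0 : EuclideanSpace ℝ (Fin n))) ((1 : ℝ), (0 : EuclideanSpace ℝ (Fin n))))
        + ((k + (1 - 2 * γ)) * SphAux.rr σ ^ (k + (1 - 2 * γ) - 2) * SphAux.Bp σ ((1 : ℝ), (0 : EuclideanSpace ℝ (Fin n))) * SphAux.gg γ k e ((1 : ℝ), (0 : EuclideanSpace ℝ (Fin n))) σ
          + SphAux.rr σ ^ (k + (1 - 2 * γ)) * fderiv ℝ (SphAux.gg γ k e ((1 : ℝ), (0 : EuclideanSpace ℝ (Fin n)))) σ ((1 : ℝ), (0 : EuclideanSpace ℝ (Fin n))))) + ∑ i : Fin n, (k * ((σ.1 ^ (1 - 2 * γ) * (SphAux.rr σ ^ (k - 2) * fderiv ℝ (SphAux.FF k e) σ ((0 : ℝ), EuclideanSpace.single i (1 : ℝ)))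
            + σ.1 ^ (1 - 2 * γ) * ((k - 2) * SphAux.rr σ ^ (k - 2 - 2) * SphAux.Bp σ ((0 : ℝ), EuclideanSpace.single i (1 : ℝ))) * SphAux.FF k e σ
            + (1 - 2 * γ) * σ.1 ^ (1 - 2 * γ - 1) * (0 : ℝ) * (SphAux.rr σ ^ (k - 2) * SphAux.FF k e σ)) * SphAux.Bp σ ((0 : ℝ), EuclideanSpace.single i (1 : ℝ))
          + σ.1 ^ (1 - 2 * γ) * (SphAux.rr σ ^ (k - 2) * SphAux.FF k e σ) * SphAux.Bp ((0 : ℝ), EuclideanSpace.single i (1 : ℝ)) ((0 : ℝ), EuclideanSpace.single i (1 : ℝ)))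
        + ((k + (1 - 2 * γ)) * SphAux.rr σ ^ (k + (1 - 2 * γ) - 2) * SphAux.Bp σ ((0 : ℝ), EuclideanSpace.single i (1 : ℝ)) * SphAux.gg γ k e ((0 : ℝ), EuclideanSpace.single i (1 : ℝ)) σ
          + SphAux.rr σ ^ (k + (1 - 2 * γ)) * fderiv ℝ (SphAux.gg γ k e ((0 : ℝ), EuclideanSpace.single i (1 : ℝ))) σ ((0 : ℝ), EuclideanSpace.single i (1 : ℝ))))
      = k * (k + (n : ℝ) - 2 * γ) * σ.1 ^ (1 - 2 * γ) * e σ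
        + (fderiv ℝ (SphAux.gg γ k e ((1 : ℝ), (0 : EuclideanSpace ℝ (Fin n)))) σ ((1 : ℝ), (0 : EuclideanSpace ℝ (Fin n))) + ∑ i : Fin n, fderiv ℝ (SphAux.gg γ k e ((0 : ℝ), EuclideanSpace.single i (1 : ℝ))) σ ((0 : ℝ), EuclideanSpace.single i (1 : ℝ))) := by
    rw [hE0, hsum2]
    rw [Finset.sum_add_distrib, Finset.sum_add_distrib, Finset.sum_add_distrib,
      ← Finset.mul_sum, ← Finset.mul_sum, Finset.sum_const, Finset.card_univ,
      Fintype.card_fin, nsmul_eq_mul]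
    linear_combination (((2 * k + (1 - 2 * γ)) * σ.1 ^ (1 - 2 * γ))) * heuler + ((k * (k - 2) * σ.1 ^ (1 - 2 * γ) * e σ)) * hnorm
  have hsph : sphDivW γ k e σ = fderiv ℝ (SphAux.gg γ k e ((1 : ℝ), (0 : EuclideanSpace ℝ (Fin n)))) σ ((1 : ℝ), (0 : EuclideanSpace ℝ (Fin n))) + ∑ i : Fin n, fderiv ℝ (SphAux.gg γ k e ((0 : ℝ), EuclideanSpace.single i (1 : ℝ))) σ ((0 : ℝ), EuclideanSpace.single i (1 : ℝ)) := rfl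
  rw [hsph]
  linarith [hh2, hBIG]
end
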